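/- In the three-spin system, for all real θ: exp(-iπ I_{1z}I_{2x}) · exp(-i(θ/2) I_{2y}I_{3z}) · exp(iπ I_{1z}I_{2x}) = exp(-iθ I_{1z}I_{2z}I_{3z}). -/

import Mathlib

/-!
Write `X = I1z I2x`, `M = I2y I3z`, `Z = I1z I2z I3z` and `U = exp (-π i X)`, so that
`exp (π i X) = U⁻¹` and the left-hand side is `exp (-(θ/2) i • U M U⁻¹)`. It remains to see
that `U M U⁻¹ = 2 Z`. Since `M` anticommutes with `X`, `M U⁻¹ = U M`, hence `U M U⁻¹ = U² M`.
As `4 X` is an involution, `U² = exp (-(π/2) i • 4 X) = -4 i X`, and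
`-4 i X M = -4 i (i/2) Z = 2 Z`.
-/

open Matrix NormedSpace Real
open scoped Matrix Kronecker

noncomputable section

def Ix : Matrix (Fin 2) (Fin 2) ℂ := (1/2 : ℂ) • !![0, 1; 1, 0]
def Iy : Matrix (Fin 2) (Fin 2) ℂ := (1/2 : ℂ) • !![0, -Complex.I; Complex.I, 0]
def Iz : Matrix (Fin 2) (Fin 2) ℂ := (1/2 : ℂ) • !![1, 0; 0, -1]

abbrev Spin3 := Matrix (Fin 2 × Fin 2 × Fin 2) (Fin 2 × Fin 2 × Fin 2) ℂ

/-- The operator acting as `P`, `Q`, `R` on the three tensor factors of `(ℂ²)⊗³`. -/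
def triple (P Q R : Matrix (Fin 2) (Fin 2) ℂ) : Spin3 := P ⊗ₖ (Q ⊗ₖ R)

def I1x : Spin3 := triple Ix 1 1
def I1y : Spin3 := triple Iy 1 1
def I1z : Spin3 := triple Iz 1 1
def I2x : Spin3 := triple 1 Ix 1
def I2y : Spin3 := triple 1 Iy 1
def I2z : Spin3 := triple 1 Iz 1
def I3x : Spin3 := triple 1 1 Ix
def I3y : Spin3 := triple 1 1 Iy
def I3z : Spin3 := triple 1 1 Iz

theorem NormedSpace.exp_smul_of_mul_self_eq_one {𝔸 : Type*} [Ring 𝔸] [Algebra ℂ 𝔸]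
    [TopologicalSpace 𝔸] [IsTopologicalRing 𝔸] [ContinuousSMul ℂ 𝔸] [T2Space 𝔸]
    {J : 𝔸} (hJ : J * J = 1) (z : ℂ) :
    exp (z • J) = Complex.cosh z • 1 + Complex.sinh z • J := by
  have hpow (n : ℕ) : J ^ (2 * n) = 1 := by rw [pow_mul, sq, hJ, one_pow]
  rw [exp_eq_tsum ℂ]
  refine HasSum.tsum_eq (HasSum.even_add_odd ?_ ?_)
  · convert (Complex.hasSum_cosh z).smul_const (1 : 𝔸) using 2 with n
    rw [smul_pow, hpow, smul_smul, inv_mul_eq_div]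
  · convert (Complex.hasSum_sinh z).smul_const J using 2 with n
    rw [smul_pow, pow_succ J, hpow, one_mul, smul_smul, inv_mul_eq_div]

theorem Ix_mul_Ix : Ix * Ix = (1 / 4 : ℂ) • 1 := by
  ext i j; fin_cases i <;> fin_cases j <;> simp [Ix, Matrix.mul_apply, Fin.sum_univ_two]
    <;> norm_num

theorem Iz_mul_Iz : Iz * Iz = (1 / 4 : ℂ) • 1 := by
  ext i j; fin_cases i <;> fin_cases j <;> simp [Iz, Matrix.mul_apply, Fin.sum_univ_two]
    <;> norm_num

theorem Ix_mul_Iy : Ix * Iy = (Complex.I / 2) • Iz := by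
  ext i j; fin_cases i <;> fin_cases j <;> simp [Ix, Iy, Iz, Matrix.mul_apply, Fin.sum_univ_two]
    <;> ring

theorem Iy_mul_Ix : Iy * Ix = (-(Complex.I / 2)) • Iz := by
  ext i j; fin_cases i <;> fin_cases j <;> simp [Ix, Iy, Iz, Matrix.mul_apply, Fin.sum_univ_two]
    <;> ring

theorem triple_mul (P Q R P' Q' R' : Matrix (Fin 2) (Fin 2) ℂ) :
    triple P Q R * triple P' Q' R' = triple (P * P') (Q * Q') (R * R') := by
  simp only [triple, ← Matrix.mul_kronecker_mul]

theorem triple_one : triple 1 1 1 = 1 := by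
  simp only [triple, Matrix.one_kronecker_one]

theorem triple_smul_left (c : ℂ) (P Q R : Matrix (Fin 2) (Fin 2) ℂ) :
    triple (c • P) Q R = c • triple P Q R := by
  simp only [triple, Matrix.smul_kronecker]

theorem triple_smul_mid (c : ℂ) (P Q R : Matrix (Fin 2) (Fin 2) ℂ) :
    triple P (c • Q) R = c • triple P Q R := by
  simp only [triple, Matrix.smul_kronecker, Matrix.kronecker_smul]

theorem I1z_mul_I2x_mul_self : I1z * I2x * (I1z * I2x) = (1 / 16 : ℂ) • 1 := by
  simp only [I1z, I2x, triple_mul, mul_one, one_mul, Iz_mul_Iz, Ix_mul_Ix, triple_smul_left,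
    triple_smul_mid, triple_one, smul_smul]
  norm_num

theorem I1z_mul_I2x_mul_I2y_mul_I3z :
    I1z * I2x * (I2y * I3z) = (Complex.I / 2) • (I1z * I2z * I3z) := by
  simp only [I1z, I2x, I2y, I2z, I3z, triple_mul, mul_one, one_mul, Ix_mul_Iy, triple_smul_mid]

theorem I2y_mul_I3z_mul_I1z_mul_I2x :
    I2y * I3z * (I1z * I2x) = (-(Complex.I / 2)) • (I1z * I2z * I3z) := by
  simp only [I1z, I2x, I2y, I2z, I3z, triple_mul, mul_one, one_mul, Iy_mul_Ix, triple_smul_mid]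

open Complex in
theorem exp_smul_I1z_mul_I2x_conj_I2y_mul_I3z :
    exp ((-((π : ℂ) * I)) • (I1z * I2x)) * (I2y * I3z) * exp (((π : ℂ) * I) • (I1z * I2x)) =
      (2 : ℂ) • (I1z * I2z * I3z) := by
  set X := I1z * I2x
  set M := I2y * I3z
  set U := exp ((-((π : ℂ) * I)) • X)
  have hMU : M * exp (((π : ℂ) * I) • X) = U * M := by
    have hMX : SemiconjBy M X (-X) := by
      rw [SemiconjBy, I2y_mul_I3z_mul_I1z_mul_I2x, neg_mul, I1z_mul_I2x_mul_I2y_mul_I3z,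
        neg_smul]
    have hsemi : SemiconjBy M (((π : ℂ) * I) • X) ((-((π : ℂ) * I)) • X) := by
      simpa only [smul_neg, neg_smul] using hMX.smul_right ((π : ℂ) * I)
    -- `SemiconjBy.exp_right` needs a Banach algebra; any norm on matrices will do.
    exact open scoped Matrix.Norms.Operator in hsemi.exp_right
  have hUU : U * U = (-(4 * I)) • X := by
    have hσ : ((4 : ℂ) • X) * ((4 : ℂ) • X) = 1 := by
      rw [smul_mul_smul, I1z_mul_I2x_mul_self, smul_smul]; norm_num
    rw [← Matrix.exp_add_of_commute _ _ (Commute.refl _), ← add_smul,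
      show -((π : ℂ) * I) + -((π : ℂ) * I) = (-((π : ℂ) / 2) * I) * 4 by ring, mul_smul,
      exp_smul_of_mul_self_eq_one hσ]
    simp only [cosh_mul_I, sinh_mul_I, Complex.cos_neg, Complex.sin_neg, Complex.cos_pi_div_two,
      Complex.sin_pi_div_two, zero_smul, zero_add, smul_smul]
    congr 1
    ring
  rw [mul_assoc, hMU, ← mul_assoc, hUU, smul_mul_assoc, I1z_mul_I2x_mul_I2y_mul_I3z, smul_smul]
  congr 1
  linear_combination (-2 : ℂ) * I_sq

theorem trilinear_conjugation (θ : ℝ) :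
    NormedSpace.exp ((-((Real.pi : ℂ) * Complex.I)) • (I1z * I2x)) *
      NormedSpace.exp ((-(((θ : ℂ) / 2) * Complex.I)) • (I2y * I3z)) *
      NormedSpace.exp (((Real.pi : ℂ) * Complex.I) • (I1z * I2x)) =
    NormedSpace.exp ((-((θ : ℂ) * Complex.I)) • (I1z * I2z * I3z)) := by
  set U := exp ((-((π : ℂ) * Complex.I)) • (I1z * I2x))
  have hUinv : exp (((π : ℂ) * Complex.I) • (I1z * I2x)) = U⁻¹ := by
    rw [← Matrix.exp_neg, ← neg_smul, neg_neg]
  have hconj := exp_smul_I1z_mul_I2x_conj_I2y_mul_I3z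
  rw [hUinv] at hconj
  rw [hUinv, ← Matrix.exp_conj _ _ (Matrix.isUnit_exp _), mul_smul_comm, smul_mul_assoc, hconj,
    smul_smul]
  congr 2
  ring
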